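/- Let 1 ≤ i ≤ n, let π be a connected decorated permutation of [n] with associated connected Grassmann necklace I, and let J be the connected Grassmann necklace associated to the connected decorated permutation R^{i}[π] defined by R^{i}[π](j) = π(j−i) + i (all values taken mod n in [n]). Then the exchange graphs G^I and G^J are isomorphic as simple graphs. -/

import Mathlib

open SimpleGraph

namespace WS

/-- Integers (elements of the cyclically ordered set `[n]`, identified with `Fin n`)
are *cyclically ordered* if some rotation of the list is strictly increasing. -/
def CyclicallyOrdered {n : ℕ} (l : List (Fin n)) : Prop :=
  ∃ k : ℕ, (l.rotate k).Pairwise (· < ·)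

/-- Two subsets of `[n]` are *weakly separated*. -/
def WeaklySeparated {n : ℕ} (A B : Finset (Fin n)) : Prop :=
  ¬ ∃ a b a' b' : Fin n, CyclicallyOrdered [a, b, a', b'] ∧
      a ∈ A \ B ∧ a' ∈ A \ B ∧ b ∈ B \ A ∧ b' ∈ B \ A

/-- The cyclic successor `i + 1` in `[n]`. -/
def cnext {n : ℕ} (i : Fin n) : Fin n := i + ⟨1 % n, Nat.mod_lt 1 i.pos⟩

/-- A (connected) Grassmann necklace. -/
def IsGrassmannNecklace {n : ℕ} (N : Fin n → Finset (Fin n)) : Prop :=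
  (∀ i j : Fin n, (N i).card = (N j).card) ∧
    (∀ i : Fin n, cnext i ∈ N (cnext i)) ∧ ∀ i : Fin n, N i \ {i} ⊆ N (cnext i)

/-- The linear order `<ᵢ` on `[n]` starting at `i`. -/
def cyclicLT {n : ℕ} (i a b : Fin n) : Prop := (a - i).val < (b - i).val

instance {n : ℕ} (i a b : Fin n) : Decidable (cyclicLT i a b) :=
  inferInstanceAs (Decidable ((a - i).val < (b - i).val))

/-- The Gale order `≤ᵢ` : comparing the sorted lists elementwise w.r.t. `≤ᵢ`. -/
def FinsetLE {n : ℕ} (i : Fin n) (A B : Finset (Fin n)) : Prop :=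
  List.Forall₂ (· ≤ ·) (Finset.sort (A.image fun x => x - i) (· ≤ ·))
    (Finset.sort (B.image fun x => x - i) (· ≤ ·))

/-- The positroid associated to a Grassmann necklace. -/
def positroid {n : ℕ} (N : Fin n → Finset (Fin n)) : Set (Finset (Fin n)) :=
  {J | (∀ i, J.card = (N i).card) ∧ ∀ i, FinsetLE i (N i) J}

/-- A weakly separated collection. -/
def IsWSC {n : ℕ} (W : Finset (Finset (Fin n))) : Prop :=
  ∀ A ∈ W, ∀ B ∈ W, WeaklySeparated A B

/-- A weakly separated collection over a Grassmann necklace. -/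
def IsWSCOver {n : ℕ} (N : Fin n → Finset (Fin n)) (W : Finset (Finset (Fin n))) : Prop :=
  IsWSC W ∧ ∀ A ∈ W, A ∈ positroid N

/-- A maximal weakly separated collection over a Grassmann necklace. -/
def IsMaxWSCOver {n : ℕ} (N : Fin n → Finset (Fin n)) (W : Finset (Finset (Fin n))) : Prop :=
  IsWSCOver N W ∧ ∀ W', IsWSCOver N W' → W ⊆ W' → W' = W

/-- `V ∪ {a, b}`. -/
def pairAdd {n : ℕ} (V : Finset (Fin n)) (a b : Fin n) : Finset (Fin n) :=
  insert a (insert b V)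

/-- `V₂` is obtained from `V₁` by a mutation. -/
def Mutation {n : ℕ} (V1 V2 : Finset (Finset (Fin n))) : Prop :=
  ∃ (V : Finset (Fin n)) (a b c d : Fin n),
    CyclicallyOrdered [a, b, c, d] ∧ a ∉ V ∧ b ∉ V ∧ c ∉ V ∧ d ∉ V ∧
    pairAdd V a b ∈ V1 ∧ pairAdd V b c ∈ V1 ∧ pairAdd V c d ∈ V1 ∧
    pairAdd V d a ∈ V1 ∧ pairAdd V a c ∈ V1 ∧
    V2 = insert (pairAdd V b d) (V1.erase (pairAdd V a c))

/-- The type of maximal weakly separated collections over `N`. -/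
abbrev MWSC {n : ℕ} (N : Fin n → Finset (Fin n)) : Type :=
  {W : Finset (Finset (Fin n)) // IsMaxWSCOver N W}

/-- The exchange graph of a Grassmann necklace. -/
def exchangeGraph {n : ℕ} (N : Fin n → Finset (Fin n)) : SimpleGraph (MWSC N) :=
  SimpleGraph.fromRel fun V1 V2 => Mutation V1.1 V2.1

/-- The type of maximal weakly separated collections over `N` containing `C`. -/
abbrev CMWSC {n : ℕ} (N : Fin n → Finset (Fin n)) (C : Finset (Finset (Fin n))) : Type :=
  {W : Finset (Finset (Fin n)) // IsMaxWSCOver N W ∧ C ⊆ W}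

/-- The `C`-constant graph `G^I(C)` : the induced subgraph of the exchange graph
on the maximal weakly separated collections containing `C`. -/
def constantGraph {n : ℕ} (N : Fin n → Finset (Fin n)) (C : Finset (Finset (Fin n))) :
    SimpleGraph (CMWSC N C) :=
  SimpleGraph.fromRel fun V1 V2 => Mutation V1.1 V2.1

/-- The set of distinct subsets appearing in the necklace. -/
def necklaceSet {n : ℕ} (N : Fin n → Finset (Fin n)) : Finset (Finset (Fin n)) :=
  Finset.univ.image N

/-- The necklace `N` has interior size `c`. -/
def HasInteriorSize {n : ℕ} (N : Fin n → Finset (Fin n)) (c : ℕ) : Prop :=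
  ∀ W, IsMaxWSCOver N W → W.card = (necklaceSet N).card + c

/-- The `C`-constant graph `G^I(C)` has co-dimension `c`. -/
def HasCodim {n : ℕ} (N : Fin n → Finset (Fin n)) (C : Finset (Finset (Fin n))) (c : ℕ) :
    Prop :=
  ∀ W, IsMaxWSCOver N W → W.card = C.card + c

/-- Two `k`-element subsets are quasi-adjacent if their intersection has `k - 1` elements. -/
def QuasiAdjacent {n : ℕ} (A B : Finset (Fin n)) : Prop :=
  A.card = B.card ∧ (A ∩ B).card + 1 = A.card

/-- The `C`-constant graph `G^I(C)` is applicable. -/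
def Applicable {n : ℕ} (N : Fin n → Finset (Fin n)) (C : Finset (Finset (Fin n))) : Prop :=
  ∀ V ∈ C, ∃ l : List (Finset (Fin n)),
    l.head? = some V ∧ (∀ W ∈ l, W ∈ C) ∧ List.Chain' QuasiAdjacent l ∧
    ∃ W ∈ necklaceSet N, l.getLast? = some W

/-- The necklace `N` is mutation-friendly: the intersection of all maximal weakly separated
collections over `N` is exactly the necklace. -/
def MutationFriendly {n : ℕ} (N : Fin n → Finset (Fin n)) : Prop :=
  ∀ A : Finset (Fin n), (∀ W, IsMaxWSCOver N W → A ∈ W) ↔ A ∈ necklaceSet N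

/-- The `C`-constant graph `G^I(C)` is mutation-friendly. -/
def CMutationFriendly {n : ℕ} (N : Fin n → Finset (Fin n)) (C : Finset (Finset (Fin n))) :
    Prop :=
  ∀ A : Finset (Fin n), (∀ W, IsMaxWSCOver N W → C ⊆ W → A ∈ W) ↔ A ∈ C

/-- The necklace `N` is very-mutation-friendly. -/
def VeryMutationFriendly {n : ℕ} (N : Fin n → Finset (Fin n)) : Prop :=
  MutationFriendly N ∧
    ∀ i : ℕ, HasInteriorSize N i →
      ∃ W : ℕ → Finset (Finset (Fin n)),
        (∀ j, 1 ≤ j → j ≤ i - 1 →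
            IsWSCOver N (W j) ∧ necklaceSet N ⊆ W j ∧
            (W j).card + j = i + (necklaceSet N).card ∧
            Applicable N (W j) ∧ CMutationFriendly N (W j)) ∧
        ∀ j, 1 ≤ j → j + 1 ≤ i - 1 → W (j + 1) ⊆ W j

/-- The circular interval `[i, j)` in `[n]`. -/
def circInterval {n : ℕ} (i j : Fin n) : Finset (Fin n) :=
  Finset.univ.filter fun x => (x - i).val < (j - i).val

/-- A connected decorated permutation. -/
def IsConnectedPerm {n : ℕ} (π : Equiv.Perm (Fin n)) : Prop :=
  ¬ ∃ i j : Fin n, i ≠ j ∧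
      (circInterval i j).image (fun x => π x) = circInterval i j ∧
      (circInterval j i).image (fun x => π x) = circInterval j i

/-- The Grassmann necklace associated to a decorated permutation:
`I_i = {j : j <ᵢ π⁻¹(j)}`. -/
def necklaceOfPerm {n : ℕ} (π : Equiv.Perm (Fin n)) : Fin n → Finset (Fin n) :=
  fun i => Finset.univ.filter fun j => cyclicLT i j (π⁻¹ j)

/-- `π` is the decorated permutation associated to the necklace `N`:
`π(i) = j` whenever `I_{i+1} = (I_i ∖ {i}) ∪ {j}`. -/
def IsDecoratedPermOf {n : ℕ} (π : Equiv.Perm (Fin n)) (N : Fin n → Finset (Fin n)) : Prop :=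
  ∀ i : Fin n, N (cnext i) = insert (π i) ((N i).erase i)

/-- The label-reflection operation `LR^{2i}[π](j) = 2i - π⁻¹(2i - j)`. -/
def LRop {n : ℕ} [NeZero n] (i : Fin n) (π : Equiv.Perm (Fin n)) : Equiv.Perm (Fin n) :=
  ((Equiv.subLeft (i + i)).trans (π⁻¹ : Equiv.Perm (Fin n))).trans
    (Equiv.subLeft (i + i))

/-- The between-label-reflection operation `BLR^{2i-1}[π](j) = (2i-1) - π⁻¹((2i-1) - j)`. -/
def BLRop {n : ℕ} [NeZero n] (i : Fin n) (π : Equiv.Perm (Fin n)) : Equiv.Perm (Fin n) :=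
  ((Equiv.subLeft (i + i - 1)).trans (π⁻¹ : Equiv.Perm (Fin n))).trans
    (Equiv.subLeft (i + i - 1))

/-- The rotation operation `R^i[π](j) = π(j - i) + i`. -/
def Rop {n : ℕ} [NeZero n] (i : Fin n) (π : Equiv.Perm (Fin n)) : Equiv.Perm (Fin n) :=
  ((Equiv.subRight i).trans π).trans (Equiv.addRight i)

/-- One step in generating the equivalence class of decorated permutations. -/
def PermStep {n : ℕ} [NeZero n] (π σ : Equiv.Perm (Fin n)) : Prop :=
  σ = π⁻¹ ∨ (∃ i : Fin n, σ = LRop i π) ∨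
    (Even n ∧ ∃ i : Fin n, σ = BLRop i π) ∨ ∃ i : Fin n, σ = Rop i π

/-- Two decorated permutations belong to the same equivalence class. -/
def PermEquiv {n : ℕ} [NeZero n] (π σ : Equiv.Perm (Fin n)) : Prop :=
  Relation.EqvGen PermStep π σ

/-- `σ` is the permutation `π₁ = 312` (on `[3]`, in `Fin 3` coordinates). -/
def IsStandardPermOne (σ : Equiv.Perm (Fin 3)) : Prop :=
  σ 1 = 0 ∧ σ 2 = 1 ∧ σ 0 = 2

/-- `σ` is the permutation `π_c` on `[2c]` (for `c ≥ 2`), in `Fin (2c)` coordinates,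
where the element `a ∈ [2c]` corresponds to `a % 2c : Fin (2c)`. -/
def IsStandardPerm (c : ℕ) (hc : 2 ≤ c) (σ : Equiv.Perm (Fin (2 * c))) : Prop :=
  ∀ a : ℕ, 1 ≤ a → a ≤ 2 * c →
    σ ⟨a % (2 * c), Nat.mod_lt _ (by omega)⟩ =
      ⟨(if a = 1 then 3
        else if a ≤ c then 2 * c + 1 - a
        else if a = c + 1 then 1
        else if a = c + 2 then 2
        else 2 * c + 3 - a) % (2 * c), Nat.mod_lt _ (by omega)⟩

/-- The decorated permutation `π` (on `[n]`) belongs to the equivalence class `𝒞_c`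
of the permutation `π_c`. -/
def InStandardClass (c : ℕ) {n : ℕ} (π : Equiv.Perm (Fin n)) : Prop :=
  (c = 1 ∧ ∃ h : n = 3, ∃ σ : Equiv.Perm (Fin 3),
      IsStandardPermOne σ ∧ PermEquiv ((finCongr h).permCongr π) σ) ∨
    ∃ hc : 2 ≤ c, ∃ h : n = 2 * c, ∃ σ : Equiv.Perm (Fin (2 * c)),
      IsStandardPerm c hc σ ∧
      @PermEquiv (2 * c) ⟨by omega⟩ ((finCongr h).permCongr π) σ

/-- The embedding of the elements of `[n]` into `[n + m - 2]` used in gluing (the element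
`n` of `[n]`, i.e. `0 : Fin n`, is sent to the element `n` of `[n + m - 2]`). -/
def glueEmbed {n m : ℕ} (hn : 3 ≤ n) (hm : 3 ≤ m) (v : Fin n) : Fin (n + m - 2) :=
  if h : v.val = 0 then ⟨n, by omega⟩ else ⟨v.val, by have := v.isLt; omega⟩

/-- The shifted embedding `b ↦ b + n - 2` of the elements of `[m]` into `[n + m - 2]`
used in gluing (the element `m` of `[m]`, i.e. `0 : Fin m`, is sent to the element
`n + m - 2`, i.e. `0 : Fin (n + m - 2)`). -/
def glueShift {n m : ℕ} (hn : 3 ≤ n) (hm : 3 ≤ m) (v : Fin m) : Fin (n + m - 2) :=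
  if h : v.val = 0 then ⟨0, by omega⟩ else ⟨v.val + n - 2, by have := v.isLt; omega⟩

/-- `π₃` is the decorated permutation of the glued Grassmann necklace `I □ J`, where
`π₁, π₂` are the decorated permutations of `I, J`. -/
def IsGluedPerm {n m : ℕ} (hn : 3 ≤ n) (hm : 3 ≤ m)
    (π1 : Equiv.Perm (Fin n)) (π2 : Equiv.Perm (Fin m))
    (π3 : Equiv.Perm (Fin (n + m - 2))) : Prop :=
  (∀ a : Fin n, a.val ≠ 0 → (π1 a).val ≠ 0 →
      π3 (glueEmbed hn hm a) = glueEmbed hn hm (π1 a)) ∧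
  (∀ a : Fin n, a.val ≠ 0 → (π1 a).val = 0 →
      π3 (glueEmbed hn hm a) = glueShift hn hm (π2 ⟨1, by omega⟩)) ∧
  (∀ a : Fin m, (a.val = 0 ∨ 3 ≤ a.val) → π2 a ≠ ⟨1, by omega⟩ →
      π3 (glueShift hn hm a) = glueShift hn hm (π2 a)) ∧
  (∀ a : Fin m, (a.val = 0 ∨ 3 ≤ a.val) → π2 a = ⟨1, by omega⟩ →
      π3 (glueShift hn hm a) = glueEmbed hn hm (π1 ⟨0, by omega⟩))

/-- The box product of an arbitrary family of simple graphs. -/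
def boxProdFamily {ι : Type*} {V : ι → Type*} (G : ∀ i, SimpleGraph (V i)) :
    SimpleGraph (∀ i, V i) where
  Adj v w := ∃ j, (G j).Adj (v j) (w j) ∧ ∀ l, l ≠ j → v l = w l
  symm := ⟨by
    rintro v w ⟨j, h, hl⟩
    exact ⟨j, (G j).adj_symm h, fun l hlj => (hl l hlj).symm⟩⟩
  loopless := ⟨by
    rintro v ⟨j, h, -⟩
    exact (G j).loopless.irrefl _ h⟩

/-!
Weak separation and mutation are phrased only through the cyclic order of quadruples, so any
relabelling of `[n]` preserving that order transports them, and relabelling every member of a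
collection carries maximal weakly separated collections over `N` to those over `N'` as soon as
it carries the positroid of `N` onto that of `N'`. The rotation `j ↦ j + i` preserves cyclic
order, and the necklace of `R^i[π]` is the rotated necklace of `π`, so rotation moves the
positroid of `I` onto that of `J`.
-/

section CyclicOrder

variable {n : ℕ}

lemma val_sub_eq_ite (a b : Fin n) :
    (b - a).val = if a.val ≤ b.val then b.val - a.val else n + b.val - a.val := by
  split_ifs with h
  · exact Fin.coe_sub_iff_le.mpr (Fin.le_def.mpr h)
  · exact Fin.coe_sub_iff_lt.mpr (Fin.lt_def.mpr (not_le.mp h))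

lemma cyclicallyOrdered_four_iff_rotations (a b c d : Fin n) :
    CyclicallyOrdered [a, b, c, d] ↔
      [a, b, c, d].Pairwise (· < ·) ∨ [b, c, d, a].Pairwise (· < ·) ∨
        [c, d, a, b].Pairwise (· < ·) ∨ [d, a, b, c].Pairwise (· < ·) := by
  constructor
  · rintro ⟨k, hk⟩
    rw [← List.rotate_mod] at hk
    have : k % 4 < 4 := Nat.mod_lt _ (by norm_num)
    interval_cases k % 4 <;> simp_all [List.rotate]
  · rintro (h | h | h | h)
    exacts [⟨0, h⟩, ⟨1, h⟩, ⟨2, h⟩, ⟨3, h⟩]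

lemma cyclicallyOrdered_four_iff (a b c d : Fin n) :
    CyclicallyOrdered [a, b, c, d] ↔ cyclicLT a a b ∧ cyclicLT a b c ∧ cyclicLT a c d := by
  rw [cyclicallyOrdered_four_iff_rotations]
  simp only [cyclicLT, val_sub_eq_ite, List.pairwise_cons, List.mem_cons, List.not_mem_nil,
    or_false, forall_eq_or_imp, forall_eq, false_imp_iff, implies_true, List.Pairwise.nil,
    and_true, Fin.lt_def, le_refl, if_true, Nat.sub_self]
  have := a.isLt
  have := b.isLt
  have := c.isLt
  have := d.isLt
  split_ifs <;> omega

def PreservesCyclicOrder (e : Equiv.Perm (Fin n)) : Prop :=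
  ∀ a b c d, CyclicallyOrdered [e a, e b, e c, e d] ↔ CyclicallyOrdered [a, b, c, d]

lemma PreservesCyclicOrder.symm {e : Equiv.Perm (Fin n)} (he : PreservesCyclicOrder e) :
    PreservesCyclicOrder e.symm := fun a b c d => by
  rw [← he]
  simp only [Equiv.apply_symm_apply]

end CyclicOrder

section Relabel

variable {n : ℕ} {e : Equiv.Perm (Fin n)}

lemma weaklySeparated_map_iff (he : PreservesCyclicOrder e) {A B : Finset (Fin n)} :
    WeaklySeparated (A.map e.toEmbedding) (B.map e.toEmbedding) ↔ WeaklySeparated A B := by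
  simp only [WeaklySeparated, ← Finset.map_sdiff, Finset.mem_map_equiv]
  refine not_congr ⟨?_, ?_⟩
  · rintro ⟨a, b, a', b', h, ha, ha', hb, hb'⟩
    refine ⟨e.symm a, e.symm b, e.symm a', e.symm b', ?_, ha, ha', hb, hb'⟩
    rwa [← he.symm] at h
  · rintro ⟨a, b, a', b', h, ha, ha', hb, hb'⟩
    refine ⟨e a, e b, e a', e b', (he _ _ _ _).mpr h, ?_⟩
    simpa only [Equiv.symm_apply_apply] using ⟨ha, ha', hb, hb'⟩

lemma isWSC_map_iff (he : PreservesCyclicOrder e) {W : Finset (Finset (Fin n))} :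
    IsWSC (W.map e.finsetCongr.toEmbedding) ↔ IsWSC W := by
  simp only [IsWSC, Finset.forall_mem_map, Equiv.coe_toEmbedding, Equiv.finsetCongr_apply,
    weaklySeparated_map_iff he]

lemma isWSCOver_map_iff (he : PreservesCyclicOrder e) {N N' : Fin n → Finset (Fin n)}
    (hN : ∀ J, J.map e.toEmbedding ∈ positroid N' ↔ J ∈ positroid N)
    {W : Finset (Finset (Fin n))} :
    IsWSCOver N' (W.map e.finsetCongr.toEmbedding) ↔ IsWSCOver N W := by
  simp only [IsWSCOver, isWSC_map_iff he, Finset.forall_mem_map, Equiv.coe_toEmbedding,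
    Equiv.finsetCongr_apply, hN]

lemma isMaxWSCOver_map_iff (he : PreservesCyclicOrder e) {N N' : Fin n → Finset (Fin n)}
    (hN : ∀ J, J.map e.toEmbedding ∈ positroid N' ↔ J ∈ positroid N)
    {W : Finset (Finset (Fin n))} :
    IsMaxWSCOver N' (W.map e.finsetCongr.toEmbedding) ↔ IsMaxWSCOver N W := by
  rw [IsMaxWSCOver, IsMaxWSCOver, isWSCOver_map_iff he hN,
    ← e.finsetCongr.finsetCongr.forall_congr_right]
  simp only [Equiv.finsetCongr_apply, isWSCOver_map_iff he hN, Finset.map_subset_map,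
    Finset.map_inj]

lemma pairAdd_map (V : Finset (Fin n)) (a b : Fin n) :
    (pairAdd V a b).map e.toEmbedding = pairAdd (V.map e.toEmbedding) (e a) (e b) := by
  simp only [pairAdd, Finset.map_insert, Equiv.coe_toEmbedding]

lemma Mutation.map (he : PreservesCyclicOrder e) {W₁ W₂ : Finset (Finset (Fin n))}
    (h : Mutation W₁ W₂) :
    Mutation (W₁.map e.finsetCongr.toEmbedding) (W₂.map e.finsetCongr.toEmbedding) := by
  obtain ⟨V, a, b, c, d, hcyc, ha, hb, hc, hd, hab, hbc, hcd, hda, hac, rfl⟩ := h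
  have hV : ∀ {x}, x ∉ V → e x ∉ V.map e.toEmbedding := fun hx => by
    rwa [← Equiv.coe_toEmbedding, Finset.mem_map' e.toEmbedding]
  have hW : ∀ {x y}, pairAdd V x y ∈ W₁ →
      pairAdd (V.map e.toEmbedding) (e x) (e y) ∈ W₁.map e.finsetCongr.toEmbedding :=
    fun hxy => by rw [← pairAdd_map]; exact Finset.mem_map_of_mem _ hxy
  refine ⟨_, _, _, _, _, (he a b c d).mpr hcyc, hV ha, hV hb, hV hc, hV hd, hW hab, hW hbc,
    hW hcd, hW hda, hW hac, ?_⟩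
  simp only [Finset.map_insert, Finset.map_erase, Equiv.coe_toEmbedding, Equiv.finsetCongr_apply,
    pairAdd_map]

lemma mutation_map_iff (he : PreservesCyclicOrder e) {W₁ W₂ : Finset (Finset (Fin n))} :
    Mutation (W₁.map e.finsetCongr.toEmbedding) (W₂.map e.finsetCongr.toEmbedding) ↔
      Mutation W₁ W₂ := by
  refine ⟨fun h => ?_, Mutation.map he⟩
  simpa only [← Equiv.finsetCongr_symm, Finset.map_map,
    Function.Embedding.equiv_toEmbedding_trans_symm_toEmbedding, Finset.map_refl] using
    h.map he.symm

def exchangeGraphIsoOfPreservesCyclicOrder (he : PreservesCyclicOrder e)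
    {N N' : Fin n → Finset (Fin n)}
    (hN : ∀ J, J.map e.toEmbedding ∈ positroid N' ↔ J ∈ positroid N) :
    exchangeGraph N ≃g exchangeGraph N' where
  toEquiv := e.finsetCongr.finsetCongr.subtypeEquiv fun W => by
    rw [Equiv.finsetCongr_apply, isMaxWSCOver_map_iff he hN]
  map_rel_iff' {W₁ W₂} := by
    simp [exchangeGraph, mutation_map_iff he, Subtype.ext_iff]

end Relabel

section Rotation

variable {n : ℕ} [NeZero n]

lemma cyclicLT_add_right (s k a b : Fin n) :
    cyclicLT (k + s) (a + s) (b + s) ↔ cyclicLT k a b := by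
  simp only [cyclicLT, add_sub_add_right_eq_sub]

lemma preservesCyclicOrder_addRight (s : Fin n) : PreservesCyclicOrder (Equiv.addRight s) :=
  fun a b c d => by
    simp only [Equiv.coe_addRight, cyclicallyOrdered_four_iff, cyclicLT_add_right]

lemma finsetLE_map_addRight (s k : Fin n) (A B : Finset (Fin n)) :
    FinsetLE (k + s) (A.map (Equiv.addRight s).toEmbedding) (B.map (Equiv.addRight s).toEmbedding)
      ↔ FinsetLE k A B := by
  simp only [FinsetLE, Finset.map_eq_image, Finset.image_image, Equiv.coe_toEmbedding,
    Equiv.coe_addRight, Function.comp_def, add_sub_add_right_eq_sub]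

lemma map_addRight_mem_positroid_iff (s : Fin n) (N : Fin n → Finset (Fin n))
    (J : Finset (Fin n)) :
    J.map (Equiv.addRight s).toEmbedding ∈
        positroid (fun k => (N (k - s)).map (Equiv.addRight s).toEmbedding) ↔
      J ∈ positroid N := by
  simp only [positroid, Set.mem_ofPred_eq, Finset.card_map]
  refine and_congr ((Equiv.addRight s).forall_congr fun k => ?_).symm
    ((Equiv.addRight s).forall_congr fun k => ?_).symm
  · simp only [Equiv.coe_addRight, add_sub_cancel_right]
  · simp only [Equiv.coe_addRight, add_sub_cancel_right, finsetLE_map_addRight]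

lemma necklaceOfPerm_Rop (i : Fin n) (π : Equiv.Perm (Fin n)) :
    necklaceOfPerm (Rop i π) =
      fun k => (necklaceOfPerm π (k - i)).map (Equiv.addRight i).toEmbedding := by
  funext k
  ext x
  have hinv : (Rop i π)⁻¹ x = π⁻¹ (x - i) + i := by
    simp [Rop, Equiv.Perm.inv_def, sub_eq_add_neg]
  simp only [necklaceOfPerm, Finset.mem_filter, Finset.mem_univ, true_and, Finset.mem_map_equiv,
    Equiv.addRight_symm, Equiv.coe_addRight, hinv, ← sub_eq_add_neg]
  rw [← cyclicLT_add_right i (k - i), sub_add_cancel, sub_add_cancel]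

end Rotation

theorem exchangeGraph_iso_of_R_general (n : ℕ) [NeZero n] (i : Fin n)
    (π : Equiv.Perm (Fin n)) :
    Nonempty (exchangeGraph (necklaceOfPerm π) ≃g exchangeGraph (necklaceOfPerm (Rop i π))) := by
  rw [necklaceOfPerm_Rop]
  exact ⟨exchangeGraphIsoOfPreservesCyclicOrder (preservesCyclicOrder_addRight i)
    (map_addRight_mem_positroid_iff i _)⟩

theorem exchangeGraph_iso_of_R (n : ℕ) [NeZero n] (hn : 3 ≤ n) (i : Fin n)
    (π : Equiv.Perm (Fin n)) (hπ : IsConnectedPerm π) (hπ' : IsConnectedPerm (Rop i π)) :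
    Nonempty (exchangeGraph (necklaceOfPerm π) ≃g exchangeGraph (necklaceOfPerm (Rop i π))) :=
  exchangeGraph_iso_of_R_general n i π

end WS
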